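/- arXiv:1409.3855 — 4 statements merged into one kernel-verified Lean document; each statement's English description precedes it below -/
import Mathlib

section
/- Let l = (l_1, ..., l_n) be the topologically ordered path-length sequence of a finite topological binary tree with leaves v_1, ..., v_n. For every full segment S = [i,j] of l, the number 2^{m(S)} · K(S) is a positive integer, where m(S) is the neighborhood maximin parameter and K(S) = 2^{-l_i} + ... + 2^{-l_j} is the partial Kraft sum. -/
/-- Minimum of the values `l i, ..., l j`. -/
def segMin (l : ℕ → ℕ) (i j : ℕ) : ℕ :=
  (Finset.Icc i j).fold min (l i) l

/-- Neighborhood maximin parameter `m[i,j]`: the maximum of `min(l h, ..., l k)` over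
subintervals `[h,k]` of `[1,n]` properly containing `[i,j]`, with value `0` if there
are none (in particular for `[i,j] = [1,n]`). -/
def nmaxim (l : ℕ → ℕ) (n i j : ℕ) : ℕ :=
  (((Finset.Icc 1 i) ×ˢ (Finset.Icc j n)).filter (fun p => p ≠ (i, j))).fold max 0
    (fun p => segMin l p.1 p.2)

/-- `[i,j]` is a full segment (island) of the sequence `l` restricted to `[1,n]`. -/
def IsFullSeg (l : ℕ → ℕ) (n i j : ℕ) : Prop :=
  1 ≤ i ∧ i ≤ j ∧ j ≤ n ∧ nmaxim l n i j < segMin l i j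

/-- Partial Kraft sum `K[i,j] = 2^{-l_i} + ... + 2^{-l_j}`. -/
noncomputable def kraft (l : ℕ → ℕ) (i j : ℕ) : ℝ :=
  ∑ k ∈ Finset.Icc i j, ((2:ℝ) ^ (l k))⁻¹

/-- A topological binary tree: every internal node has exactly a left and a right son. -/
inductive BTree : Type
  | leaf : BTree
  | node : BTree → BTree → BTree

/-- The left-to-right (topologically ordered) path-length sequence: depths of leaves. -/
def BTree.depths : BTree → List ℕ
  | .leaf => [0]
  | .node L R => (L.depths.map (· + 1)) ++ (R.depths.map (· + 1))

/-- The codewords of the leaves in left-to-right order (`false` = 0 = left, `true` = 1 = right). -/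
def BTree.codes : BTree → List (List Bool)
  | .leaf => [[]]
  | .node L R => (L.codes.map (List.cons false)) ++ (R.codes.map (List.cons true))

/-!
The leaves of a binary tree tile `[0, 1)` by dyadic intervals from left to right, so the Kraft
sum of the leaves before a leaf of depth `d`, and also the sum up to and including it, is a
multiple of `2⁻ᵈ`. Each neighbour `v_{i-1}`, `v_{j+1}` of a full segment `[i, j]` has depth at
most `m = m[i, j]`; hence `K[1, i-1]` and `K[1, j]` (with `K[1, n] = 1`) are multiples of `2⁻ᵐ`,
and so is their positive difference `K[i, j]`.
-/

noncomputable def listKraft (L : List ℕ) : ℝ := (L.map fun d => ((2:ℝ) ^ d)⁻¹).sum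

@[simp]
lemma listKraft_nil : listKraft [] = 0 := rfl

@[simp]
lemma listKraft_cons (d : ℕ) (L : List ℕ) :
    listKraft (d :: L) = ((2:ℝ) ^ d)⁻¹ + listKraft L := by
  simp [listKraft]

@[simp]
lemma listKraft_append (A B : List ℕ) : listKraft (A ++ B) = listKraft A + listKraft B := by
  simp [listKraft]

lemma listKraft_map_succ (L : List ℕ) : listKraft (L.map (· + 1)) = 2⁻¹ * listKraft L := by
  induction L with
  | nil => simp
  | cons d L ih => simp only [List.map_cons, listKraft_cons, ih, pow_succ]; ring

lemma BTree.listKraft_depths (t : BTree) : listKraft t.depths = 1 := by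
  induction t with
  | leaf => simp [BTree.depths]
  | node L R ihL ihR =>
    simp only [BTree.depths, listKraft_append, listKraft_map_succ, ihL, ihR]; norm_num

def IsDyadicNat (d : ℕ) (x : ℝ) : Prop := ∃ z : ℕ, (2:ℝ) ^ d * x = z

namespace IsDyadicNat

variable {d e : ℕ} {x y : ℝ}

lemma zero (d : ℕ) : IsDyadicNat d 0 := ⟨0, by simp⟩

lemma one : IsDyadicNat 0 1 := ⟨1, by simp⟩

lemma inv_two_pow (d : ℕ) : IsDyadicNat d ((2:ℝ) ^ d)⁻¹ := ⟨1, by simp⟩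

lemma add (hx : IsDyadicNat d x) (hy : IsDyadicNat d y) : IsDyadicNat d (x + y) := by
  obtain ⟨a, ha⟩ := hx
  obtain ⟨b, hb⟩ := hy
  exact ⟨a + b, by rw [mul_add, ha, hb, Nat.cast_add]⟩

lemma mono (hx : IsDyadicNat d x) (hde : d ≤ e) : IsDyadicNat e x := by
  obtain ⟨a, ha⟩ := hx
  refine ⟨2 ^ (e - d) * a, ?_⟩
  rw [← Nat.sub_add_cancel hde, pow_add, mul_assoc, ha, Nat.add_sub_cancel]
  push_cast; ring

lemma half (hx : IsDyadicNat d x) : IsDyadicNat (d + 1) (2⁻¹ * x) := by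
  obtain ⟨a, ha⟩ := hx
  exact ⟨a, by rw [← ha, pow_succ]; ring⟩

lemma sub_pos_nat (hx : IsDyadicNat d x) (hy : IsDyadicNat d y) (hxy : y < x) :
    ∃ z : ℕ, 0 < z ∧ (2:ℝ) ^ d * (x - y) = z := by
  obtain ⟨a, ha⟩ := hx
  obtain ⟨b, hb⟩ := hy
  have hba : (b:ℝ) < a := by
    rw [← ha, ← hb]; exact mul_lt_mul_of_pos_left hxy (by positivity)
  have hba' : b < a := by exact_mod_cast hba
  exact ⟨a - b, by omega, by rw [mul_sub, ha, hb, Nat.cast_sub hba'.le]⟩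

end IsDyadicNat

lemma BTree.isDyadicNat_listKraft_take (t : BTree) {k : ℕ} (hk : k < t.depths.length) :
    IsDyadicNat t.depths[k] (listKraft (t.depths.take k)) := by
  induction t generalizing k with
  | leaf =>
    obtain rfl : k = 0 := by simpa [BTree.depths] using hk
    exact IsDyadicNat.zero _
  | node L R ihL ihR =>
    simp only [BTree.depths, List.length_append, List.length_map] at hk ⊢
    by_cases hkL : k < L.depths.length
    · rw [List.take_append_of_le_length (by simpa using hkL.le),
        List.getElem_append_left (by simpa using hkL), List.getElem_map, ← List.map_take,
        listKraft_map_succ]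
      exact (ihL hkL).half
    · push Not at hkL
      rw [List.getElem_append_right (by simpa using hkL)]
      simp only [List.take_append,
        List.take_of_length_le (l := L.depths.map _) (by simpa using hkL), List.getElem_map,
        List.length_map, ← List.map_take, listKraft_append, listKraft_map_succ,
        L.listKraft_depths]
      exact (IsDyadicNat.one.half.mono (by omega)).add (ihR (by omega)).half

lemma BTree.isDyadicNat_listKraft_take_add_one (t : BTree) {k : ℕ} (hk : k < t.depths.length) :
    IsDyadicNat t.depths[k] (listKraft (t.depths.take (k + 1))) := by
  rw [List.take_add_one, List.getElem?_eq_getElem hk, Option.toList_some, listKraft_append,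
    listKraft_cons, listKraft_nil, add_zero]
  exact (t.isDyadicNat_listKraft_take hk).add (.inv_two_pow _)

section Segments

variable {l : ℕ → ℕ} {n i j : ℕ}

lemma segMin_le {x : ℕ} (hx : x ∈ Finset.Icc i j) : segMin l i j ≤ l x :=
  (Finset.fold_min_le _).mpr (Or.inr ⟨x, hx, le_rfl⟩)

lemma le_segMin_iff {a : ℕ} (hij : i ≤ j) :
    a ≤ segMin l i j ↔ ∀ x ∈ Finset.Icc i j, a ≤ l x := by
  rw [segMin, Finset.le_fold_min]
  exact ⟨And.right, fun h => ⟨h i (Finset.mem_Icc.mpr ⟨le_rfl, hij⟩), h⟩⟩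

lemma segMin_le_nmaxim {h k : ℕ} (hh : 1 ≤ h) (hhi : h ≤ i) (hjk : j ≤ k) (hkn : k ≤ n)
    (hne : (h, k) ≠ (i, j)) : segMin l h k ≤ nmaxim l n i j := by
  refine (Finset.le_fold_max _).mpr (Or.inr ⟨(h, k), ?_, le_rfl⟩)
  simp only [Finset.mem_filter, Finset.mem_product, Finset.mem_Icc]
  exact ⟨⟨⟨hh, hhi⟩, hjk, hkn⟩, hne⟩

/- Extending a full segment by a neighbour gives a proper superinterval, whose minimum is at
most `m < segMin l i j`; so that minimum is the neighbour's depth. -/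

lemma IsFullSeg.left_neighbor_le_nmaxim (h : IsFullSeg l n i j) (hi : 2 ≤ i) :
    l (i - 1) ≤ nmaxim l n i j := by
  obtain ⟨-, hij, hjn, hfull⟩ := h
  have hext : min (l (i - 1)) (segMin l i j) ≤ segMin l (i - 1) j := by
    refine (le_segMin_iff (by omega)).mpr fun x hx => ?_
    rcases eq_or_ne x (i - 1) with rfl | hx'
    · exact min_le_left _ _
    · exact (min_le_right _ _).trans (segMin_le (by simp only [Finset.mem_Icc] at hx ⊢; omega))
  have := segMin_le_nmaxim (l := l) (i := i) (h := i - 1) (k := j) (by omega) (by omega) le_rfl hjn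
    (by simp only [ne_eq, Prod.mk.injEq]; omega)
  omega

lemma IsFullSeg.right_neighbor_le_nmaxim (h : IsFullSeg l n i j) (hj : j < n) :
    l (j + 1) ≤ nmaxim l n i j := by
  obtain ⟨hi, hij, -, hfull⟩ := h
  have hext : min (l (j + 1)) (segMin l i j) ≤ segMin l i (j + 1) := by
    refine (le_segMin_iff (by omega)).mpr fun x hx => ?_
    rcases eq_or_ne x (j + 1) with rfl | hx'
    · exact min_le_left _ _
    · exact (min_le_right _ _).trans (segMin_le (by simp only [Finset.mem_Icc] at hx ⊢; omega))
  have := segMin_le_nmaxim (l := l) (j := j) (h := i) (k := j + 1) hi le_rfl (by omega) hj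
    (by simp only [ne_eq, Prod.mk.injEq]; omega)
  omega

lemma kraft_prefix_add {a b : ℕ} (hab : a ≤ b) :
    kraft l 1 a + kraft l (a + 1) b = kraft l 1 b := by
  have hIcc : ∀ c, Finset.Icc 1 c = Finset.Ioc 0 c := Finset.Icc_add_one_left_eq_Ioc 0
  simp only [kraft, Finset.Icc_add_one_left_eq_Ioc, hIcc]
  exact Finset.sum_Ioc_consecutive _ (Nat.zero_le a) hab

lemma kraft_pos (hij : i ≤ j) : 0 < kraft l i j :=
  Finset.sum_pos (fun _ _ => by positivity) (Finset.nonempty_Icc.mpr hij)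

end Segments

section Tree

variable {t : BTree} {n : ℕ} {l : ℕ → ℕ} {d k : ℕ}

lemma BTree.getElem_depths_eq (hn : n = t.depths.length)
    (hl : ∀ k ∈ Finset.Icc 1 n, l k = t.depths.getD (k - 1) 0) (hk : k < n) :
    t.depths[k]'(hn ▸ hk) = l (k + 1) := by
  rw [hl (k + 1) (Finset.mem_Icc.mpr ⟨by omega, hk⟩), Nat.add_sub_cancel,
    List.getD_eq_getElem]

lemma BTree.kraft_one_eq_listKraft_take (hn : n = t.depths.length)
    (hl : ∀ k ∈ Finset.Icc 1 n, l k = t.depths.getD (k - 1) 0) (hk : k ≤ n) :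
    kraft l 1 k = listKraft (t.depths.take k) := by
  induction k with
  | zero => simp [kraft]
  | succ k ih =>
    have hkn : k < t.depths.length := by omega
    rw [← kraft_prefix_add k.le_succ, ih (by omega), List.take_add_one,
      List.getElem?_eq_getElem hkn, Option.toList_some, listKraft_append, listKraft_cons,
      listKraft_nil, add_zero, BTree.getElem_depths_eq hn hl (by omega)]
    simp [kraft]

lemma BTree.isDyadicNat_kraft_prefix_of_next (hn : n = t.depths.length)
    (hl : ∀ k ∈ Finset.Icc 1 n, l k = t.depths.getD (k - 1) 0) (hk : k ≤ n)
    (hd : k < n → l (k + 1) ≤ d) : IsDyadicNat d (kraft l 1 k) := by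
  rw [BTree.kraft_one_eq_listKraft_take hn hl hk]
  rcases hk.eq_or_lt with rfl | hk
  · rw [hn, List.take_length, t.listKraft_depths]
    exact IsDyadicNat.one.mono (Nat.zero_le d)
  · refine (t.isDyadicNat_listKraft_take (hn ▸ hk)).mono ?_
    rw [BTree.getElem_depths_eq hn hl hk]
    exact hd hk

lemma BTree.isDyadicNat_kraft_prefix_of_last (hn : n = t.depths.length)
    (hl : ∀ k ∈ Finset.Icc 1 n, l k = t.depths.getD (k - 1) 0) (hk : k ≤ n)
    (hd : 1 ≤ k → l k ≤ d) : IsDyadicNat d (kraft l 1 k) := by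
  rw [BTree.kraft_one_eq_listKraft_take hn hl hk]
  cases k with
  | zero => exact IsDyadicNat.zero d
  | succ k =>
    refine (t.isDyadicNat_listKraft_take_add_one (by omega)).mono ?_
    rw [BTree.getElem_depths_eq hn hl (by omega)]
    exact hd (by omega)

end Tree

/-- For every full segment `S = [i,j]` of the path-length sequence of a topological binary
tree, the number `2^{m(S)} · K(S)` is a positive integer. -/
theorem full_segment_scaled_kraft_is_posint (t : BTree) (n : ℕ) (l : ℕ → ℕ)
    (hn : n = t.depths.length)
    (hl : ∀ k ∈ Finset.Icc 1 n, l k = t.depths.getD (k - 1) 0)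
    (i j : ℕ) (h : IsFullSeg l n i j) :
    ∃ z : ℕ, 0 < z ∧ (2:ℝ) ^ (nmaxim l n i j) * kraft l i j = z := by
  have ⟨hi, hij, hjn, _⟩ := h
  have hsplit : kraft l 1 (i - 1) + kraft l i j = kraft l 1 j := by
    simpa [Nat.sub_add_cancel hi] using kraft_prefix_add (l := l) (a := i - 1) (b := j) (by omega)
  have hto_j : IsDyadicNat (nmaxim l n i j) (kraft l 1 j) :=
    BTree.isDyadicNat_kraft_prefix_of_next hn hl hjn h.right_neighbor_le_nmaxim
  have hbefore_i : IsDyadicNat (nmaxim l n i j) (kraft l 1 (i - 1)) :=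
    BTree.isDyadicNat_kraft_prefix_of_last hn hl (by omega) fun hi' => by
      simpa using h.left_neighbor_le_nmaxim (by omega)
  rw [eq_sub_of_add_eq' hsplit]
  exact hto_j.sub_pos_nat hbefore_i (by linarith [kraft_pos (l := l) hij])
end

section
/- Let l = (l_1, ..., l_n) be the path-length sequence of a topological binary tree with leaves v_1, ..., v_n in left-to-right order, and let S = [i,j] be a full segment with neighborhood maximin parameter m = m(S). Then 2^m · K(S) equals the number of distinct ancestors at depth m of the leaves v_i, ..., v_j, where K(S) is the partial Kraft sum 2^{-l_i} + ... + 2^{-l_j}. -/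
/-!
Read the codeword of a leaf as a binary fraction: by induction on the tree it equals the Kraft
sum `P_k` of all leaves to the left of that leaf. Hence, for a leaf of depth at least `m`, the
number whose binary digits are its depth-`m` ancestor is `⌊2^m P_k⌋`. Inside a full segment
every depth exceeds `m`, so `2^m P_k` grows by steps in `(0, 1/2]`; at the two ends it is an
integer, because the neighbouring leaves have depth at most `m` (or the segment reaches an end
of the tree, where `P` is `0` or `1`). Its floors therefore run through every integer from one
end value up to the other, and there are exactly `2^m K(S)` of them.
-/

open Finset

/-- The natural number with binary digits `c`, most significant digit first. -/
def binVal (c : List Bool) : ℕ :=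
  Nat.ofDigits 2 (c.reverse.map Bool.toNat)

lemma forall_mem_map_toNat_lt_two (c : List Bool) : ∀ x ∈ c.map Bool.toNat, x < 2 := by
  simp only [List.forall_mem_map]
  exact fun b _ => b.toNat_lt

lemma binVal_lt (c : List Bool) : binVal c < 2 ^ c.length := by
  simpa [binVal] using Nat.ofDigits_lt_base_pow_length one_lt_two
    (forall_mem_map_toNat_lt_two c.reverse)

lemma binVal_append (c d : List Bool) :
    binVal (c ++ d) = binVal c * 2 ^ d.length + binVal d := by
  simp only [binVal, List.reverse_append, List.map_append, Nat.ofDigits_append, List.length_map,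
    List.length_reverse]
  ring

lemma binVal_cons (b : Bool) (c : List Bool) :
    binVal (b :: c) = b.toNat * 2 ^ c.length + binVal c := by
  simpa [binVal] using binVal_append [b] c

lemma binVal_take (c : List Bool) (m : ℕ) :
    binVal (c.take m) = binVal c / 2 ^ (c.length - m) := by
  have h := binVal_append (c.take m) (c.drop m)
  rw [c.take_append_drop, List.length_drop] at h
  rw [h, add_comm, Nat.add_mul_div_right _ _ (by positivity),
    Nat.div_eq_of_lt (by simpa using binVal_lt (c.drop m)), zero_add]

lemma binVal_injOn (m : ℕ) : Set.InjOn binVal {c | c.length = m} := by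
  intro c hc d hd h
  have := Nat.ofDigits_inj_of_len_eq one_lt_two (by simp [hc.out, hd.out])
    (forall_mem_map_toNat_lt_two c.reverse) (forall_mem_map_toNat_lt_two d.reverse) h
  simpa using (List.map_injective_iff.mpr (by decide : Function.Injective Bool.toNat)) this

lemma floor_two_pow_mul_binVal_div {c : List Bool} {m : ℕ} (hm : m ≤ c.length) :
    ⌊(2 : ℝ) ^ m * (binVal c / 2 ^ c.length)⌋ = binVal (c.take m) := by
  have h : (2 : ℝ) ^ m * (binVal c / 2 ^ c.length) =
      (binVal c : ℝ) / (2 ^ (c.length - m) : ℕ) := by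
    rw [← Nat.sub_add_cancel hm]
    push_cast
    rw [Nat.add_sub_cancel, pow_add]
    field_simp
  rw [h, ← Int.natCast_floor_eq_floor (by positivity), Nat.floor_div_eq_div, binVal_take]

lemma card_image_take_eq_card_image_binVal {ι : Type*} [DecidableEq ι] (s : Finset ι)
    (g : ι → List Bool) {m : ℕ} (hm : ∀ k ∈ s, m ≤ (g k).length) :
    #(s.image fun k => (g k).take m) = #(s.image fun k => (binVal ((g k).take m) : ℤ)) := by
  have hlen : ∀ p ∈ s.image fun k => (g k).take m, p.length = m := by
    simp only [mem_image]
    rintro _ ⟨k, hk, rfl⟩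
    exact List.length_take_of_le (hm k hk)
  have hcomp : (s.image fun k => (binVal ((g k).take m) : ℤ)) =
      (s.image fun k => (g k).take m).image fun p => (binVal p : ℤ) := by
    rw [image_image]
    rfl
  rw [hcomp, card_image_of_injOn fun p hp q hq hpq =>
    binVal_injOn m (hlen p hp) (hlen q hq) (Int.ofNat_inj.mp hpq)]

lemma image_Icc_eq_Icc_of_le_succ (f : ℕ → ℤ) {a b : ℕ} (hab : a ≤ b)
    (hf : ∀ k ∈ Ico a b, f k ≤ f (k + 1) ∧ f (k + 1) ≤ f k + 1) :
    (Icc a b).image f = Icc (f a) (f b) := by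
  induction b, hab using Nat.le_induction with
  | base => simp
  | succ b hab ih =>
    have ih := ih fun k hk => hf k (by simp only [mem_Ico] at hk ⊢; omega)
    have hfab : f a ≤ f b := (mem_Icc.mp (ih ▸ mem_image_of_mem f (left_mem_Icc.mpr hab))).2
    obtain ⟨hmono, hstep⟩ := hf b (by simp only [mem_Ico]; omega)
    rw [← Ico_insert_right (by omega), Ico_add_one_right_eq_Icc, image_insert, ih]
    ext z
    simp only [mem_insert, mem_Icc]
    omega

lemma image_Icc_comp_sub_one {α : Type*} [DecidableEq α] (g : ℕ → α) {i j : ℕ}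
    (hi : 1 ≤ i) :
    (Icc i j).image (fun k => g (k - 1)) = (Ico (i - 1) j).image g := by
  rw [← Ico_add_one_right_eq_Icc, ← Nat.sub_add_cancel hi, ← image_add_right_Ico, image_image]
  simp [Function.comp_def]

lemma card_image_floor_Ico (x : ℕ → ℝ) {a b : ℕ} {A B : ℤ} (hab : a ≤ b)
    (hx : ∀ k ∈ Ico a b, x k < x (k + 1) ∧ x (k + 1) ≤ x k + 1)
    (ha : x a = A) (hb : x b = B) :
    (((Ico a b).image fun k => ⌊x k⌋).card : ℝ) = x b - x a := by
  rcases hab.eq_or_lt with rfl | hab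
  · simp
  obtain ⟨b, rfl⟩ : ∃ b', b = b' + 1 := ⟨b - 1, by omega⟩
  have hlast : ⌊x b⌋ = B - 1 := by
    obtain ⟨h₁, h₂⟩ := hx b (by simp only [mem_Ico]; omega)
    rw [Int.floor_eq_iff]
    push_cast
    constructor <;> linarith
  have himage : (Ico a (b + 1)).image (fun k => ⌊x k⌋) = Icc A (B - 1) := by
    rw [Ico_add_one_right_eq_Icc, image_Icc_eq_Icc_of_le_succ _ (by omega), ha,
      Int.floor_intCast, hlast]
    intro k hk
    obtain ⟨h₁, h₂⟩ := hx k (by simp only [mem_Ico] at hk ⊢; omega)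
    exact ⟨Int.floor_mono h₁.le, (Int.floor_mono h₂).trans_eq (Int.floor_add_one _)⟩
  have hAB : A ≤ B - 1 := by
    have := himage ▸ mem_image_of_mem (fun k => ⌊x k⌋) (left_mem_Ico.mpr hab)
    simpa [ha] using this
  rw [himage, Int.card_Icc, ha, hb, ← Int.cast_natCast, Int.toNat_of_nonneg (by omega)]
  push_cast
  ring

noncomputable def kraftSum (cs : List (List Bool)) : ℝ :=
  (cs.map fun c => (2 ^ c.length)⁻¹).sum

lemma kraftSum_append (cs ds : List (List Bool)) :
    kraftSum (cs ++ ds) = kraftSum cs + kraftSum ds := by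
  simp [kraftSum]

lemma kraftSum_map_cons (b : Bool) (cs : List (List Bool)) :
    kraftSum (cs.map (b :: ·)) = kraftSum cs / 2 := by
  simp [kraftSum, Function.comp_def, pow_succ, List.sum_map_mul_left, div_eq_mul_inv, mul_comm]

lemma kraftSum_take_add_one (cs : List (List Bool)) {k : ℕ} (hk : k < cs.length) :
    kraftSum (cs.take (k + 1)) = kraftSum (cs.take k) + (2 ^ (cs.getD k []).length)⁻¹ := by
  rw [List.take_add_one, kraftSum_append, List.getElem?_eq_getElem hk,
    List.getD_eq_getElem _ _ hk]
  simp [kraftSum]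

lemma kraft_eq_kraftSum_take_sub {l : ℕ → ℕ} {cs : List (List Bool)} {i j : ℕ}
    (hi : 1 ≤ i) (hij : i ≤ j) (hj : j ≤ cs.length)
    (hl : ∀ k ∈ Icc i j, l k = (cs.getD (k - 1) []).length) :
    kraft l i j = kraftSum (cs.take j) - kraftSum (cs.take (i - 1)) := by
  have htel := sum_Icc_sub hij fun k => kraftSum (cs.take (k - 1))
  rw [Nat.add_sub_cancel] at htel
  rw [kraft, ← htel]
  refine sum_congr rfl fun k hk => ?_
  have hk' := mem_Icc.mp hk
  obtain ⟨k, rfl⟩ : ∃ k', k = k' + 1 := ⟨k - 1, by omega⟩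
  simp only [hl _ hk, Nat.add_sub_cancel, kraftSum_take_add_one _ (by omega : k < cs.length)]
  ring

lemma two_pow_mul_div_two_pow {d m : ℕ} (h : d ≤ m) (x : ℝ) :
    2 ^ m * (x / 2 ^ d) = x * 2 ^ (m - d) := by
  obtain ⟨e, rfl⟩ := Nat.exists_eq_add_of_le h
  rw [Nat.add_sub_cancel_left, pow_add]
  field_simp

namespace BTree

lemma depths_eq_map_length_codes (t : BTree) : t.depths = t.codes.map List.length := by
  induction t with
  | leaf => rfl
  | node L R ihL ihR => simp [depths, codes, ihL, ihR, Function.comp_def]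

lemma kraftSum_codes (t : BTree) : kraftSum t.codes = 1 := by
  induction t with
  | leaf => simp [codes, kraftSum]
  | node L R ihL ihR =>
    rw [codes, kraftSum_append, kraftSum_map_cons, kraftSum_map_cons, ihL, ihR]
    norm_num

lemma binVal_div_eq_kraftSum_take (t : BTree) {k : ℕ} (hk : k < t.codes.length) :
    (binVal (t.codes.getD k []) : ℝ) / 2 ^ (t.codes.getD k []).length =
      kraftSum (t.codes.take k) := by
  rw [List.getD_eq_getElem _ _ hk]
  induction t generalizing k with
  | leaf =>
    obtain rfl : k = 0 := by simpa [codes] using hk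
    simp [codes, kraftSum, binVal]
  | node L R ihL ihR =>
    simp only [codes, List.getElem_append, List.take_append, kraftSum_append,
      ← List.map_take, kraftSum_map_cons, List.getElem_map, List.length_map]
    split_ifs with hkL
    · rw [Nat.sub_eq_zero_of_le hkL.le, ← ihL hkL, binVal_cons]
      simp [kraftSum, pow_succ, div_div]
    · have hk' : k - L.codes.length < R.codes.length := by
        simp only [codes, List.length_append, List.length_map] at hk
        omega
      rw [List.take_of_length_le (by omega), kraftSum_codes, ← ihR hk', binVal_cons]
      simp only [List.length_cons, Bool.toNat_true, one_mul, Nat.cast_add, Nat.cast_pow]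
      field_simp
      ring

lemma exists_two_pow_mul_kraftSum_take_eq_intCast (t : BTree) {k m : ℕ}
    (hk : k < t.codes.length) (hm : (t.codes.getD k []).length ≤ m) :
    ∃ z : ℤ, 2 ^ m * kraftSum (t.codes.take k) = z :=
  ⟨(binVal (t.codes.getD k []) * 2 ^ (m - (t.codes.getD k []).length) : ℕ), by
    rw [← t.binVal_div_eq_kraftSum_take hk, two_pow_mul_div_two_pow hm]
    push_cast
    ring⟩

lemma exists_two_pow_mul_kraftSum_take_add_one_eq_intCast (t : BTree) {k m : ℕ}
    (hk : k < t.codes.length) (hm : (t.codes.getD k []).length ≤ m) :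
    ∃ z : ℤ, 2 ^ m * kraftSum (t.codes.take (k + 1)) = z := by
  obtain ⟨z, hz⟩ := t.exists_two_pow_mul_kraftSum_take_eq_intCast hk hm
  refine ⟨z + 2 ^ (m - (t.codes.getD k []).length), ?_⟩
  rw [kraftSum_take_add_one _ hk, mul_add, hz, ← one_div, two_pow_mul_div_two_pow hm]
  push_cast
  ring

theorem two_pow_mul_sub_kraftSum_take_eq_card (t : BTree) {a b m : ℕ} (hab : a ≤ b)
    (hb : b ≤ t.codes.length) (hdeep : ∀ k ∈ Ico a b, m < (t.codes.getD k []).length)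
    (hleft : 0 < a → (t.codes.getD (a - 1) []).length ≤ m)
    (hright : b < t.codes.length → (t.codes.getD b []).length ≤ m) :
    2 ^ m * (kraftSum (t.codes.take b) - kraftSum (t.codes.take a)) =
      #((Ico a b).image fun k => (t.codes.getD k []).take m) := by
  let x : ℕ → ℝ := fun k => 2 ^ m * kraftSum (t.codes.take k)
  have hstep : ∀ k ∈ Ico a b, x k < x (k + 1) ∧ x (k + 1) ≤ x k + 1 := fun k hk => by
    have hk' := mem_Ico.mp hk
    have hle : (2 : ℝ) ^ m * (2 ^ (t.codes.getD k []).length)⁻¹ ≤ 1 := by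
      rw [← div_eq_mul_inv]
      exact div_le_one_of_le₀ (pow_le_pow_right₀ one_le_two (hdeep k hk).le) (by positivity)
    simp only [x, kraftSum_take_add_one _ (by omega : k < t.codes.length), mul_add]
    have hpos : (0 : ℝ) < 2 ^ m * (2 ^ (t.codes.getD k []).length)⁻¹ := by positivity
    constructor <;> linarith
  obtain ⟨A, hA⟩ : ∃ A : ℤ, x a = A := by
    rcases Nat.eq_zero_or_pos a with rfl | ha
    · exact ⟨0, by simp [x, kraftSum]⟩
    simpa only [x, Nat.sub_add_cancel ha] using
      t.exists_two_pow_mul_kraftSum_take_add_one_eq_intCast (by omega) (hleft ha)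
  obtain ⟨B, hB⟩ : ∃ B : ℤ, x b = B := by
    rcases hb.eq_or_lt with rfl | hb
    · exact ⟨2 ^ m, by simp [x, kraftSum_codes]⟩
    exact t.exists_two_pow_mul_kraftSum_take_eq_intCast hb (hright hb)
  rw [mul_sub, card_image_take_eq_card_image_binVal _ _ fun k hk => (hdeep k hk).le,
    ← card_image_floor_Ico x hab hstep hA hB]
  refine congrArg _ (congrArg _ (image_congr fun k hk => ?_))
  have hk' := mem_Ico.mp hk
  simp only [x, ← t.binVal_div_eq_kraftSum_take (by omega : k < t.codes.length)]
  exact floor_two_pow_mul_binVal_div (hdeep k hk).le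

end BTree

lemma segMin_le_s8 {l : ℕ → ℕ} {i j k : ℕ} (hk : k ∈ Icc i j) : segMin l i j ≤ l k :=
  (fold_min_le _).mpr (Or.inr ⟨k, hk, le_rfl⟩)

lemma exists_le_nmaxim {l : ℕ → ℕ} {n i j a b : ℕ} (ha : 1 ≤ a) (hai : a ≤ i)
    (hab : a ≤ b) (hjb : j ≤ b) (hbn : b ≤ n) (hne : (a, b) ≠ (i, j)) :
    ∃ k ∈ Icc a b, l k ≤ nmaxim l n i j := by
  have h : segMin l a b ≤ nmaxim l n i j :=
    (le_fold_max _).mpr (Or.inr ⟨(a, b), by simp [*], le_rfl⟩)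
  rcases (fold_min_le _).mp h with h | h
  · exact ⟨a, left_mem_Icc.mpr hab, h⟩
  · exact h

namespace IsFullSeg

variable {l : ℕ → ℕ} {n i j : ℕ}

lemma nmaxim_lt (h : IsFullSeg l n i j) {k : ℕ} (hk : k ∈ Icc i j) : nmaxim l n i j < l k :=
  h.2.2.2.trans_le (segMin_le_s8 hk)

lemma apply_pred_le_nmaxim (h : IsFullSeg l n i j) (hi : 2 ≤ i) :
    l (i - 1) ≤ nmaxim l n i j := by
  have hij := h.2.1
  obtain ⟨k, hk, hlk⟩ := exists_le_nmaxim (l := l) (by omega) (Nat.sub_le i 1) (by omega)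
    le_rfl h.2.2.1 (by simp only [ne_eq, Prod.mk.injEq]; omega)
  obtain rfl : k = i - 1 := by
    by_contra hne
    exact (h.nmaxim_lt (by simp only [mem_Icc] at hk ⊢; omega)).not_ge hlk
  exact hlk

lemma apply_succ_le_nmaxim (h : IsFullSeg l n i j) (hj : j < n) :
    l (j + 1) ≤ nmaxim l n i j := by
  have hij := h.2.1
  obtain ⟨k, hk, hlk⟩ := exists_le_nmaxim (l := l) h.1 le_rfl (by omega)
    (Nat.le_succ j) hj (by simp)
  obtain rfl : k = j + 1 := by
    by_contra hne
    exact (h.nmaxim_lt (by simp only [mem_Icc] at hk ⊢; omega)).not_ge hlk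
  exact hlk

end IsFullSeg

/-- For a full segment `S = [i,j]` with maximin `m`, `2^m · K(S)` counts the distinct
depth-`m` ancestors (length-`m` codeword prefixes) of the leaves `v_i, ..., v_j`. -/
theorem scaled_kraft_counts_ancestors (t : BTree) (n : ℕ) (l : ℕ → ℕ)
    (hn : n = t.depths.length)
    (hl : ∀ k ∈ Finset.Icc 1 n, l k = t.depths.getD (k - 1) 0)
    (i j : ℕ) (h : IsFullSeg l n i j) :
    (2:ℝ) ^ (nmaxim l n i j) * kraft l i j =
      ((Finset.Icc i j).image
        (fun k => (t.codes.getD (k - 1) []).take (nmaxim l n i j))).card := by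
  have ⟨hi, hij, hjn, _⟩ := h
  have hN : t.codes.length = n := by rw [hn, t.depths_eq_map_length_codes, List.length_map]
  have hlc : ∀ k ∈ Icc 1 n, l k = (t.codes.getD (k - 1) []).length := fun k hk => by
    rw [hl k hk, t.depths_eq_map_length_codes]
    exact List.getD_map _ [] List.length
  rw [kraft_eq_kraftSum_take_sub hi hij (hN ▸ hjn) fun k hk => hlc k (Icc_subset_Icc hi hjn hk),
    image_Icc_comp_sub_one (fun k => (t.codes.getD k []).take (nmaxim l n i j)) hi]
  refine t.two_pow_mul_sub_kraftSum_take_eq_card (by omega) (by omega) (fun k hk => ?_)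
    (fun _ => ?_) (fun hj => ?_)
  · have hk' := mem_Ico.mp hk
    rw [← Nat.add_sub_cancel k 1, ← hlc _ (mem_Icc.mpr ⟨by omega, by omega⟩)]
    exact h.nmaxim_lt (mem_Icc.mpr ⟨by omega, by omega⟩)
  · rw [← hlc _ (mem_Icc.mpr ⟨by omega, by omega⟩)]
    exact h.apply_pred_le_nmaxim (by omega)
  · rw [← Nat.add_sub_cancel j 1, ← hlc _ (mem_Icc.mpr ⟨by omega, by omega⟩)]
    exact h.apply_succ_le_nmaxim (by omega)
end

section
/- Let S = [i,j] be a minimal full segment of a sequence l of positive integers, with constant value c on S and neighborhood maximin m = m(S), and suppose r = 2^m · K(S) is an integer (equivalently (j-i+1)·2^{m-c} ∈ ℤ). Let l' be obtained from l by replacing the block l_i,...,l_j by r copies of the value m. Then the map sending a full segment [h,k] of l with [h,k] ≠ S to [h,k] if k < i, to [h-(j-i+1)+r, k-(j-i+1)+r] if j < h, and to [h, k-(j-i+1)+r] otherwise, is a bijection from the set of full segments of l other than S onto the set of full segments of l', preserving partial Kraft sums and neighborhood maximin parameters. -/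
/-- The index map of the clipping operation: identity left of `S = [i,j]`, shift by
`r - (j-i+1)` right of `S`, and shift only the right endpoint for intervals meeting `S`. -/
def clipMap (i j r : ℕ) (p : ℕ × ℕ) : ℕ × ℕ :=
  if p.2 < i then p
  else if j < p.1 then (p.1 - (j - i + 1) + r, p.2 - (j - i + 1) + r)
  else (p.1, p.2 - (j - i + 1) + r)

lemma kraft_split {l : ℕ → ℕ} {a t b : ℕ} (h1 : a ≤ t + 1) (h2 : t ≤ b) :
    kraft l a b = kraft l a t + kraft l (t + 1) b := by
  rw [kraft, kraft, kraft, ← Finset.sum_union (by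
    rw [Finset.disjoint_left]
    intro x hx hx'
    rw [Finset.mem_Icc] at hx hx'
    omega)]
  congr 1
  ext x
  simp only [Finset.mem_union, Finset.mem_Icc]
  omega

-- basic segMin API
lemma segMin_le_of_mem {l : ℕ → ℕ} {i j k : ℕ} (hk : i ≤ k) (hk' : k ≤ j) :
    segMin l i j ≤ l k := by
  rw [segMin, Finset.fold_min_le]
  exact Or.inr ⟨k, Finset.mem_Icc.2 ⟨hk, hk'⟩, le_rfl⟩

lemma le_segMin_of {l : ℕ → ℕ} {i j x : ℕ} (hij : i ≤ j)
    (h : ∀ k, i ≤ k → k ≤ j → x ≤ l k) : x ≤ segMin l i j := by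
  rw [segMin, Finset.le_fold_min]
  exact ⟨h i le_rfl hij, fun k hk => by
    rw [Finset.mem_Icc] at hk; exact h k hk.1 hk.2⟩

lemma segMin_exists {l : ℕ → ℕ} {i j : ℕ} (hij : i ≤ j) :
    ∃ t, i ≤ t ∧ t ≤ j ∧ segMin l i j = l t := by
  by_contra hcon
  push_neg at hcon
  have : segMin l i j + 1 ≤ segMin l i j := by
    refine le_segMin_of hij fun k hk hk' => ?_
    have := hcon k hk hk'
    have := segMin_le_of_mem (l := l) hk hk'
    omega
  omega

lemma segMin_mono {l : ℕ → ℕ} {a b a' b' : ℕ} (h1 : a ≤ a') (h2 : a' ≤ b') (h3 : b' ≤ b) :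
    segMin l a b ≤ segMin l a' b' :=
  le_segMin_of h2 fun k hk hk' => segMin_le_of_mem (by omega) (by omega)

lemma segMin_const {l : ℕ → ℕ} {i j c : ℕ} (hij : i ≤ j)
    (h : ∀ k, i ≤ k → k ≤ j → l k = c) : segMin l i j = c := by
  refine le_antisymm ?_ (le_segMin_of hij fun k hk hk' => (h k hk hk').ge)
  have := segMin_le_of_mem (l := l) le_rfl hij
  rw [h i le_rfl hij] at this; exact this

-- nmaxim API
lemma nmaxim_le_iff {l : ℕ → ℕ} {n i j M : ℕ} :
    nmaxim l n i j ≤ M ↔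
      ∀ a b, 1 ≤ a → a ≤ i → j ≤ b → b ≤ n → (a, b) ≠ (i, j) → segMin l a b ≤ M := by
  rw [nmaxim, Finset.fold_max_le]
  constructor
  · rintro ⟨-, h⟩ a b h1 h2 h3 h4 h5
    exact h (a, b) (by simp [Finset.mem_filter, Finset.mem_product, Finset.mem_Icc, *])
  · intro h
    refine ⟨Nat.zero_le _, fun p hp => ?_⟩
    simp only [Finset.mem_filter, Finset.mem_product, Finset.mem_Icc] at hp
    exact h p.1 p.2 hp.1.1.1 hp.1.1.2 hp.1.2.1 hp.1.2.2 hp.2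

lemma le_nmaxim {l : ℕ → ℕ} {n i j a b : ℕ} (h1 : 1 ≤ a) (h2 : a ≤ i) (h3 : j ≤ b)
    (h4 : b ≤ n) (h5 : (a, b) ≠ (i, j)) : segMin l a b ≤ nmaxim l n i j := by
  rw [nmaxim, Finset.le_fold_max]
  exact Or.inr ⟨(a, b), by simp [Finset.mem_filter, Finset.mem_product, Finset.mem_Icc, *], le_rfl⟩

lemma nmaxim_exists {l : ℕ → ℕ} {n i j : ℕ} (h : nmaxim l n i j ≠ 0) :
    ∃ a b, 1 ≤ a ∧ a ≤ i ∧ j ≤ b ∧ b ≤ n ∧ (a, b) ≠ (i, j) ∧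
      segMin l a b = nmaxim l n i j := by
  by_contra hcon
  push_neg at hcon
  have : nmaxim l n i j ≤ nmaxim l n i j - 1 := by
    rw [nmaxim_le_iff]
    intro a b h1 h2 h3 h4 h5
    have hle := le_nmaxim (l := l) h1 h2 h3 h4 h5
    have := hcon a b h1 h2 h3 h4 h5
    omega
  omega

structure ClipCtx (l l' : ℕ → ℕ) (n n' i j c m r d : ℕ) : Prop where
  hi1 : 1 ≤ i
  hij : i ≤ j
  hjn : j ≤ n
  hr1 : 1 ≤ r
  hd1 : 1 ≤ d
  hrd : i + r + d = j + 1
  hnd : n' + d = n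
  hmc : m < c
  hcv : ∀ k, i ≤ k → k ≤ j → l k = c
  hmeq : nmaxim l n i j = m
  left : ∀ k, k < i → l' k = l k
  mid : ∀ k, i ≤ k → k < i + r → l' k = m
  rig : ∀ k, i + r ≤ k → l' k = l (k + d)

namespace ClipCtx

variable {l l' : ℕ → ℕ} {n n' i j c m r d : ℕ} (C : ClipCtx l l' n n' i j c m r d)
include C

lemma facts : 1 ≤ i ∧ i ≤ j ∧ j ≤ n ∧ 1 ≤ r ∧ 1 ≤ d ∧ i + r + d = j + 1 ∧ n' + d = n ∧ m < c :=
  ⟨C.hi1, C.hij, C.hjn, C.hr1, C.hd1, C.hrd, C.hnd, C.hmc⟩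

lemma hm {a b : ℕ} (h1 : 1 ≤ a) (h2 : a ≤ i) (h3 : j ≤ b) (h4 : b ≤ n)
    (h5 : (a, b) ≠ (i, j)) : segMin l a b ≤ m :=
  C.hmeq ▸ le_nmaxim h1 h2 h3 h4 h5

/-- W1: left congruence -/
lemma w1 {a b : ℕ} (hab : a ≤ b) (hb : b < i) : segMin l' a b = segMin l a b := by
  refine le_antisymm (le_segMin_of hab fun k hk hk' => ?_)
      (le_segMin_of hab fun k hk hk' => ?_)
  · rw [← C.left k (by omega)]; exact segMin_le_of_mem hk hk'
  · rw [C.left k (by omega)]; exact segMin_le_of_mem hk hk'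

/-- W2: right shift -/
lemma w2 {a b : ℕ} (ha : i + r ≤ a) (hab : a ≤ b) :
    segMin l' a b = segMin l (a + d) (b + d) := by
  refine le_antisymm (le_segMin_of (by omega) fun k hk hk' => ?_)
      (le_segMin_of hab fun k hk hk' => ?_)
  · have : k = (k - d) + d := by omega
    rw [this, ← C.rig (k - d) (by omega)]
    exact segMin_le_of_mem (by omega) (by omega)
  · rw [C.rig k (by omega)]
    exact segMin_le_of_mem (by omega) (by omega)

/-- W3: intervals containing the block -/
lemma w3 {a b' : ℕ} (h1 : 1 ≤ a) (h2 : a ≤ i) (h3 : i + r ≤ b' + 1) (h4 : b' ≤ n')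
    (h5 : (a, b' + d) ≠ (i, j)) : segMin l' a b' = segMin l a (b' + d) := by
  obtain ⟨F1, F2, F3, F4, F5, F6, F7, F8⟩ := C.facts
  have hab' : a ≤ b' := by omega
  have hjb : j ≤ b' + d := by omega
  have hbn : b' + d ≤ n := by omega
  have hSm : segMin l a (b' + d) ≤ m := C.hm h1 h2 hjb hbn h5
  refine le_antisymm (le_segMin_of (by omega) fun k hk hk' => ?_)
      (le_segMin_of hab' fun k hk hk' => ?_)
  · -- segMin l' a b' ≤ l k for k ∈ [a, b'+d]
    rcases lt_or_ge k i with hki | hki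
    · rw [← C.left k hki]; exact segMin_le_of_mem hk (by omega)
    · rcases le_or_gt k j with hkj | hkj
      · -- l k = c > m ≥ segMin l' a i ... use point i of l'
        have : segMin l' a b' ≤ l' i := segMin_le_of_mem h2 (by omega)
        rw [C.mid i le_rfl (by omega)] at this
        rw [C.hcv k hki hkj]; omega
      · have : k = (k - d) + d := by omega
        rw [this, ← C.rig (k - d) (by omega)]
        exact segMin_le_of_mem (by omega) (by omega)
  · -- segMin l a (b'+d) ≤ l' k for k ∈ [a, b']
    rcases lt_or_ge k i with hki | hki
    · rw [C.left k hki]; exact segMin_le_of_mem hk (by omega)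
    · rcases lt_or_ge k (i + r) with hkr | hkr
      · rw [C.mid k hki hkr]; exact hSm
      · rw [C.rig k hkr]; exact segMin_le_of_mem (by omega) (by omega)

/-- W4a: old interval ending inside the constant block -/
lemma w4a {a b : ℕ} (ha : a < i) (hb : i ≤ b) (hb' : b ≤ j) :
    segMin l a b = segMin l a i := by
  refine le_antisymm (segMin_mono le_rfl (by omega) hb) (le_segMin_of (by omega) ?_)
  intro k hk hk'
  rcases le_or_gt k i with h | h
  · exact segMin_le_of_mem hk h
  · have : l k = c := C.hcv k (by omega) (by omega)
    have h2 : segMin l a i ≤ l i := segMin_le_of_mem (by omega) le_rfl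
    rw [C.hcv i le_rfl C.hij] at h2
    omega

/-- W4b: new interval ending inside the m-block -/
lemma w4b {a b' : ℕ} (ha : a < i) (hb : i ≤ b') (hb' : b' < i + r) :
    segMin l' a b' = segMin l' a i := by
  refine le_antisymm (segMin_mono le_rfl (by omega) hb) (le_segMin_of (by omega) ?_)
  intro k hk hk'
  rcases le_or_gt k i with h | h
  · exact segMin_le_of_mem hk h
  · have : l' k = m := C.mid k (by omega) (by omega)
    have h2 : segMin l' a i ≤ l' i := segMin_le_of_mem (by omega) le_rfl
    rw [C.mid i le_rfl (by omega)] at h2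
    omega

/-- W4c: segMin up to i agrees between l and l', for a < i -/
lemma w4c {a : ℕ} (h1 : 1 ≤ a) (ha : a < i) : segMin l' a i = segMin l a i := by
  obtain ⟨F1, F2, F3, F4, F5, F6, F7, F8⟩ := C.facts
  have hja : segMin l a j ≤ m := by
    refine C.hm h1 (by omega) le_rfl C.hjn ?_
    intro hcontra
    rw [Prod.mk.injEq] at hcontra
    omega
  have ham : segMin l a i ≤ m := by
    obtain ⟨t, ht1, ht2, ht3⟩ := segMin_exists (l := l) (i := a) (j := j) (by omega)
    rcases lt_or_ge t i with h | h
    · have : segMin l a i ≤ l t := segMin_le_of_mem ht1 (by omega)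
      omega
    · have : l t = c := C.hcv t h ht2
      omega
  refine le_antisymm (le_segMin_of (by omega) fun k hk hk' => ?_)
      (le_segMin_of (by omega) fun k hk hk' => ?_)
  · rcases lt_or_ge k i with h | h
    · rw [← C.left k h]; exact segMin_le_of_mem hk (by omega)
    · have hki : k = i := by omega
      rw [hki]
      have hli : l i = c := C.hcv i le_rfl F2
      have h2 : segMin l' a i ≤ l' i := segMin_le_of_mem (by omega) le_rfl
      rw [C.mid i le_rfl (by omega)] at h2
      omega
  · rcases lt_or_ge k i with h | h
    · rw [C.left k h]; exact segMin_le_of_mem hk (by omega)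
    · have hki : k = i := by omega
      rw [hki, C.mid i le_rfl (by omega)]
      exact ham

/-- W5a: old interval starting inside the constant block -/
lemma w5a {a b : ℕ} (ha : i ≤ a) (ha' : a ≤ j) (hb : a ≤ b) :
    segMin l i b = segMin l a b := by
  refine le_antisymm (segMin_mono ha hb le_rfl) (le_segMin_of (by omega) ?_)
  intro k hk hk'
  rcases le_or_gt a k with h | h
  · exact segMin_le_of_mem h hk'
  · have : l k = c := C.hcv k hk (by omega)
    have h2 : segMin l a b ≤ l a := segMin_le_of_mem le_rfl hb
    rw [C.hcv a ha ha'] at h2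
    omega

/-- W5b: new interval starting inside the m-block -/
lemma w5b {a b' : ℕ} (ha : i ≤ a) (ha' : a < i + r) (hb : a ≤ b') :
    segMin l' i b' = segMin l' a b' := by
  refine le_antisymm (segMin_mono ha hb le_rfl) (le_segMin_of (by omega) ?_)
  intro k hk hk'
  rcases le_or_gt a k with h | h
  · exact segMin_le_of_mem h hk'
  · have : l' k = m := C.mid k hk (by omega)
    have h2 : segMin l' a b' ≤ l' a := segMin_le_of_mem le_rfl hb
    rw [C.mid a ha ha'] at h2
    omega


/-- P1: nmaxim preserved for segments left of the block -/
lemma p1 {h k : ℕ} (h1 : 1 ≤ h) (h2 : h ≤ k) (h3 : k < i) :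
    nmaxim l' n' h k = nmaxim l n h k := by
  obtain ⟨F1, F2, F3, F4, F5, F6, F7, F8⟩ := C.facts
  refine le_antisymm (nmaxim_le_iff.2 fun a b ha1 ha2 hb1 hb2 hne => ?_)
      (nmaxim_le_iff.2 fun a b ha1 ha2 hb1 hb2 hne => ?_)
  · rcases lt_or_ge b i with hbi | hbi
    · rw [C.w1 (by omega) hbi]
      exact le_nmaxim ha1 ha2 hb1 (by omega) hne
    · rcases lt_or_ge b (i + r) with hbr | hbr
      · rw [C.w4b (by omega) hbi hbr, C.w4c ha1 (by omega)]
        exact le_nmaxim ha1 ha2 (by omega) (by omega)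
          (by intro hc; rw [Prod.mk.injEq] at hc; omega)
      · rw [C.w3 ha1 (by omega) (by omega) hb2
          (by intro hc; rw [Prod.mk.injEq] at hc; omega)]
        exact le_nmaxim ha1 ha2 (by omega) (by omega)
          (by intro hc; rw [Prod.mk.injEq] at hc; omega)
  · rcases lt_or_ge b i with hbi | hbi
    · rw [← C.w1 (by omega) hbi]
      exact le_nmaxim ha1 ha2 hb1 (by omega) hne
    · rcases le_or_gt b j with hbj | hbj
      · rw [C.w4a (by omega) hbi hbj, ← C.w4c ha1 (by omega)]
        exact le_nmaxim ha1 ha2 (by omega) (by omega)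
          (by intro hc; rw [Prod.mk.injEq] at hc; omega)
      · obtain ⟨b', rfl⟩ : ∃ b', b = b' + d := ⟨b - d, by omega⟩
        rw [← C.w3 ha1 (by omega) (by omega) (by omega)
          (by intro hc; rw [Prod.mk.injEq] at hc; omega)]
        exact le_nmaxim ha1 ha2 (by omega) (by omega)
          (by intro hc; rw [Prod.mk.injEq] at hc; omega)

/-- P2: nmaxim preserved for segments right of the block -/
lemma p2 {h' k' : ℕ} (h1 : i + r ≤ h') (h2 : h' ≤ k') (h3 : k' ≤ n') :
    nmaxim l' n' h' k' = nmaxim l n (h' + d) (k' + d) := by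
  obtain ⟨F1, F2, F3, F4, F5, F6, F7, F8⟩ := C.facts
  refine le_antisymm (nmaxim_le_iff.2 fun a b ha1 ha2 hb1 hb2 hne => ?_)
      (nmaxim_le_iff.2 fun a b ha1 ha2 hb1 hb2 hne => ?_)
  · rcases le_or_gt (i + r) a with har | har
    · rw [C.w2 har (by omega)]
      exact le_nmaxim (by omega) (by omega) (by omega) (by omega)
        (by intro hc; apply hne; rw [Prod.mk.injEq] at hc ⊢; omega)
    · rcases le_or_gt a i with hai | hai
      · rw [C.w3 ha1 hai (by omega) (by omega)
          (by intro hc; rw [Prod.mk.injEq] at hc; omega)]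
        exact le_nmaxim ha1 (by omega) (by omega) (by omega)
          (by intro hc; rw [Prod.mk.injEq] at hc; omega)
      · rw [← C.w5b (by omega) har (by omega),
          C.w3 (by omega) le_rfl (by omega) (by omega)
            (by intro hc; rw [Prod.mk.injEq] at hc; omega)]
        exact le_nmaxim (by omega) (by omega) (by omega) (by omega)
          (by intro hc; rw [Prod.mk.injEq] at hc; omega)
  · have hbd : d ≤ b := by omega
    obtain ⟨b', rfl⟩ : ∃ b', b = b' + d := ⟨b - d, by omega⟩
    rcases le_or_gt (i + r + d) a with har | har
    · obtain ⟨a', rfl⟩ : ∃ a', a = a' + d := ⟨a - d, by omega⟩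
      rw [← C.w2 (by omega) (by omega)]
      exact le_nmaxim (by omega) (by omega) (by omega) (by omega)
        (by intro hc; apply hne; rw [Prod.mk.injEq] at hc ⊢; omega)
    · rcases le_or_gt a i with hai | hai
      · rw [← C.w3 ha1 hai (by omega) (by omega)
          (by intro hc; rw [Prod.mk.injEq] at hc; omega)]
        exact le_nmaxim ha1 (by omega) (by omega) (by omega)
          (by intro hc; rw [Prod.mk.injEq] at hc; omega)
      · rw [← C.w5a (by omega) (by omega) (by omega),
          ← C.w3 (by omega) le_rfl (by omega) (by omega)
            (by intro hc; rw [Prod.mk.injEq] at hc; omega)]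
        exact le_nmaxim (by omega) (by omega) (by omega) (by omega)
          (by intro hc; rw [Prod.mk.injEq] at hc; omega)

/-- P3: nmaxim preserved for segments containing the block -/
lemma p3 {h k' : ℕ} (h1 : 1 ≤ h) (h2 : h ≤ i) (h3 : i + r ≤ k' + 1) (h4 : k' ≤ n')
    (h5 : (h, k' + d) ≠ (i, j)) :
    nmaxim l' n' h k' = nmaxim l n h (k' + d) := by
  obtain ⟨F1, F2, F3, F4, F5, F6, F7, F8⟩ := C.facts
  refine le_antisymm (nmaxim_le_iff.2 fun a b ha1 ha2 hb1 hb2 hne => ?_)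
      (nmaxim_le_iff.2 fun a b ha1 ha2 hb1 hb2 hne => ?_)
  · rw [C.w3 ha1 (by omega) (by omega) hb2
      (by intro hc; rw [Prod.mk.injEq] at hc; apply hne; rw [Prod.mk.injEq]; omega)]
    exact le_nmaxim ha1 ha2 (by omega) (by omega)
      (by intro hc; rw [Prod.mk.injEq] at hc; apply hne; rw [Prod.mk.injEq]; omega)
  · obtain ⟨b', rfl⟩ : ∃ b', b = b' + d := ⟨b - d, by omega⟩
    rw [← C.w3 ha1 (by omega) (by omega) (by omega)
      (by intro hc; rw [Prod.mk.injEq] at hc; apply hne; rw [Prod.mk.injEq]; omega)]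
    exact le_nmaxim ha1 ha2 (by omega) (by omega)
      (by intro hc; rw [Prod.mk.injEq] at hc; apply hne; rw [Prod.mk.injEq]; omega)


/-- laminarity / trichotomy -/
lemma lam (hmin : ∀ a b : ℕ, IsFullSeg l n a b → ¬ Finset.Icc a b ⊂ Finset.Icc i j)
    {h k : ℕ} (hp : IsFullSeg l n h k) (hne : (h, k) ≠ (i, j)) :
    k < i ∨ j < h ∨ (h ≤ i ∧ j ≤ k) := by
  obtain ⟨F1, F2, F3, F4, F5, F6, F7, F8⟩ := C.facts
  obtain ⟨hp1, hp2, hp3, hp4⟩ := hp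
  rcases lt_or_ge k i with hki | hki
  · exact Or.inl hki
  rcases lt_or_ge j h with hjh | hjh
  · exact Or.inr (Or.inl hjh)
  refine Or.inr (Or.inr ?_)
  have hhi : h ≤ i := by
    by_contra hcon
    push_neg at hcon
    rcases le_or_gt k j with hkj | hkj
    · refine hmin h k ⟨hp1, hp2, hp3, hp4⟩
        ⟨Finset.Icc_subset_Icc (by omega) hkj, fun hsub => ?_⟩
      have := hsub (Finset.mem_Icc.2 ⟨le_rfl, F2⟩)
      rw [Finset.mem_Icc] at this
      omega
    · have hA1 : segMin l i k ≤ m := C.hm F1 le_rfl (by omega) (by omega)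
        (by intro hcc; rw [Prod.mk.injEq] at hcc; omega)
      have hA2 : segMin l i k ≤ nmaxim l n h k := le_nmaxim F1 (by omega) le_rfl hp3
        (by intro hcc; rw [Prod.mk.injEq] at hcc; omega)
      obtain ⟨t, ht1, ht2, ht3⟩ := segMin_exists (l := l) (i := i) (j := k) (by omega)
      rcases lt_or_ge t h with ht | ht
      · have := C.hcv t ht1 (by omega)
        omega
      · have := segMin_le_of_mem (l := l) ht ht2
        omega
  refine ⟨hhi, ?_⟩
  by_contra hcon
  push_neg at hcon
  rcases le_or_gt i h with hih | hih
  · refine hmin h k ⟨hp1, hp2, hp3, hp4⟩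
      ⟨Finset.Icc_subset_Icc hih (by omega), fun hsub => ?_⟩
    have := hsub (Finset.mem_Icc.2 ⟨F2, le_rfl⟩)
    rw [Finset.mem_Icc] at this
    omega
  · have hA1 : segMin l h j ≤ m := C.hm hp1 (by omega) le_rfl F3
      (by intro hcc; rw [Prod.mk.injEq] at hcc; omega)
    have hA2 : segMin l h j ≤ nmaxim l n h k := le_nmaxim hp1 le_rfl (by omega) (by omega)
      (by intro hcc; rw [Prod.mk.injEq] at hcc; omega)
    obtain ⟨t, ht1, ht2, ht3⟩ := segMin_exists (l := l) (i := h) (j := j) (by omega)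
    rcases le_or_gt t k with ht | ht
    · have := segMin_le_of_mem (l := l) ht1 ht
      omega
    · have := C.hcv t (by omega) ht2
      omega

/-- clipMap computations -/
lemma clip1 {h k : ℕ} (hk : k < i) : clipMap i j r (h, k) = (h, k) := by
  simp [clipMap, hk]

lemma clip2 {h k : ℕ} (hjh : j < h) (hhk : h ≤ k) :
    clipMap i j r (h, k) = (h - d, k - d) := by
  obtain ⟨F1, F2, F3, F4, F5, F6, F7, F8⟩ := C.facts
  simp only [clipMap]
  rw [if_neg (by simp; omega), if_pos (by simpa using hjh)]
  simp only [Prod.mk.injEq]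
  omega

lemma clip3 {h k : ℕ} (hhi : h ≤ i) (hjk : j ≤ k) :
    clipMap i j r (h, k) = (h, k - d) := by
  obtain ⟨F1, F2, F3, F4, F5, F6, F7, F8⟩ := C.facts
  simp only [clipMap]
  rw [if_neg (by simp; omega), if_neg (by simp; omega)]
  simp only [Prod.mk.injEq]
  exact ⟨trivial, by omega⟩

/-- kraft lemmas -/
lemma k1 {h k : ℕ} (hk : k < i) : kraft l' h k = kraft l h k := by
  refine Finset.sum_congr rfl fun t ht => ?_
  rw [Finset.mem_Icc] at ht
  rw [C.left t (by omega)]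

lemma k2 {h k : ℕ} (hh : i + r ≤ h) : kraft l' h k = kraft l (h + d) (k + d) := by
  rw [kraft, kraft, ← Finset.map_add_right_Icc, Finset.sum_map]
  refine Finset.sum_congr rfl fun t ht => ?_
  rw [Finset.mem_Icc] at ht
  simp only [addRightEmbedding_apply]
  rw [C.rig t (by omega)]

lemma k3 {h k : ℕ} (hkb : kraft l' i (i + r - 1) = kraft l i j)
    (hhi : h ≤ i) (hjk : j ≤ k) : kraft l' h (k - d) = kraft l h k := by
  obtain ⟨F1, F2, F3, F4, F5, F6, F7, F8⟩ := C.facts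
  have e1 : i - 1 + 1 = i := by omega
  have e2 : i + r - 1 + 1 = i + r := by omega
  rw [kraft_split (l := l') (a := h) (t := i - 1) (b := k - d) (by omega) (by omega), e1,
      kraft_split (l := l') (a := i) (t := i + r - 1) (b := k - d) (by omega) (by omega), e2,
      kraft_split (l := l) (a := h) (t := i - 1) (b := k) (by omega) (by omega), e1,
      kraft_split (l := l) (a := i) (t := j) (b := k) (by omega) (by omega)]
  have hk1 : kraft l' h (i - 1) = kraft l h (i - 1) := by
    refine Finset.sum_congr rfl fun t ht => ?_
    rw [Finset.mem_Icc] at ht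
    rw [C.left t (by omega)]
  have hk2 : kraft l' (i + r) (k - d) = kraft l (j + 1) k := by
    rw [C.k2 le_rfl, show i + r + d = j + 1 by omega, show k - d + d = k by omega]
  rw [hk1, hkb, hk2]

/-- a full segment of l' cannot start strictly inside the block -/
lemma noStartInBlock {h k : ℕ} (hfp : IsFullSeg l' n' h k) (h1 : i < h) (h2 : h < i + r) :
    False := by
  obtain ⟨F1, F2, F3, F4, F5, F6, F7, F8⟩ := C.facts
  obtain ⟨hp1, hp2, hp3, hp4⟩ := hfp
  have hmem : segMin l' h k ≤ l' h := segMin_le_of_mem le_rfl hp2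
  rw [C.mid h (by omega) h2] at hmem
  have hge : segMin l' h k ≤ segMin l' (h - 1) k := by
    refine le_segMin_of (by omega) fun t ht ht' => ?_
    rcases le_or_gt h t with ht2 | ht2
    · exact segMin_le_of_mem ht2 ht'
    · have he : t = h - 1 := by omega
      rw [he, C.mid (h - 1) (by omega) (by omega)]
      exact hmem
  have := le_nmaxim (l := l') (n := n') (i := h) (j := k) (a := h - 1) (b := k)
    (by omega) (by omega) le_rfl hp3
    (by intro hcc; rw [Prod.mk.injEq] at hcc; omega)
  omega

/-- a full segment of l' cannot end strictly inside the block -/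
lemma noEndInBlock {h k : ℕ} (hfp : IsFullSeg l' n' h k) (h1 : i ≤ k) (h2 : k + 1 < i + r) :
    False := by
  obtain ⟨F1, F2, F3, F4, F5, F6, F7, F8⟩ := C.facts
  obtain ⟨hp1, hp2, hp3, hp4⟩ := hfp
  have hmem : segMin l' h k ≤ l' k := segMin_le_of_mem hp2 le_rfl
  rw [C.mid k h1 (by omega)] at hmem
  have hge : segMin l' h k ≤ segMin l' h (k + 1) := by
    refine le_segMin_of (by omega) fun t ht ht' => ?_
    rcases le_or_gt t k with ht2 | ht2
    · exact segMin_le_of_mem ht ht2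
    · have he : t = k + 1 := by omega
      rw [he, C.mid (k + 1) (by omega) (by omega)]
      exact hmem
  have := le_nmaxim (l := l') (n := n') (i := h) (j := k) (a := h) (b := k + 1)
    hp1 le_rfl (by omega) (by omega)
    (by intro hcc; rw [Prod.mk.injEq] at hcc; omega)
  omega

/-- the block itself is not a full segment of l' -/
lemma blockNotFull : ¬ IsFullSeg l' n' i (i + r - 1) := by
  obtain ⟨F1, F2, F3, F4, F5, F6, F7, F8⟩ := C.facts
  rintro ⟨-, -, -, h4⟩
  have hsm : segMin l' i (i + r - 1) = m :=
    segMin_const (by omega) fun k hk hk' => C.mid k hk (by omega)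
  rw [hsm] at h4
  have hmeq := C.hmeq
  obtain ⟨a, b, g1, g2, g3, g4, g5, g6⟩ :=
    nmaxim_exists (l := l) (n := n) (i := i) (j := j) (by omega)
  obtain ⟨b', rfl⟩ : ∃ b', b = b' + d := ⟨b - d, by omega⟩
  have hw := C.w3 g1 g2 (by omega) (by omega) g5
  have hle : segMin l' a b' ≤ nmaxim l' n' i (i + r - 1) :=
    le_nmaxim g1 g2 (by omega) (by omega)
      (by intro hcc; rw [Prod.mk.injEq] at hcc; apply g5; rw [Prod.mk.injEq]; omega)
  omega

end ClipCtx



def clipInv (i j r : ℕ) (q : ℕ × ℕ) : ℕ × ℕ :=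
  if q.2 < i then q
  else if i + r ≤ q.1 then (q.1 + (j - i + 1) - r, q.2 + (j - i + 1) - r)
  else (q.1, q.2 + (j - i + 1) - r)

/-- Clipping a minimal full segment `S = [i,j]` (constant value `c`, maximin `m`,
`r = 2^m K(S)`): replacing the block by `r` copies of `m` induces a bijection between
the full segments of `l` other than `S` and the full segments of `l'`, preserving
partial Kraft sums and neighborhood maximin parameters. -/
theorem clip_minimal_full_segment_bijection
    (l l' : ℕ → ℕ) (n n' i j c m r : ℕ)
    (hpos : ∀ k ∈ Finset.Icc 1 n, 0 < l k)
    (hS : IsFullSeg l n i j)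
    (hmin : ∀ a b : ℕ, IsFullSeg l n a b → ¬ Finset.Icc a b ⊂ Finset.Icc i j)
    (hc : ∀ k ∈ Finset.Icc i j, l k = c)
    (hm : m = nmaxim l n i j)
    (hr : (r : ℝ) = (2:ℝ) ^ m * kraft l i j)
    (hn' : n' = n - (j - i + 1) + r)
    (hl'left : ∀ k, k < i → l' k = l k)
    (hl'mid : ∀ k, i ≤ k → k < i + r → l' k = m)
    (hl'right : ∀ k, i + r ≤ k → l' k = l (k + (j - i + 1) - r)) :
    Set.BijOn (clipMap i j r)
        {p : ℕ × ℕ | IsFullSeg l n p.1 p.2 ∧ p ≠ (i, j)}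
        {p : ℕ × ℕ | IsFullSeg l' n' p.1 p.2} ∧
      ∀ p : ℕ × ℕ, IsFullSeg l n p.1 p.2 → p ≠ (i, j) →
        kraft l' (clipMap i j r p).1 (clipMap i j r p).2 = kraft l p.1 p.2 ∧
        nmaxim l' n' (clipMap i j r p).1 (clipMap i j r p).2 = nmaxim l n p.1 p.2 := by
  obtain ⟨hi1, hij, hjn, hfull⟩ := hS
  have hcv : ∀ k, i ≤ k → k ≤ j → l k = c := fun k h1 h2 => hc k (Finset.mem_Icc.2 ⟨h1, h2⟩)
  have hseg : segMin l i j = c := segMin_const hij hcv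
  have hmc : m < c := by rw [hm]; rwa [hseg] at hfull
  have hkr : kraft l i j = ((j + 1 - i : ℕ) : ℝ) * ((2:ℝ) ^ c)⁻¹ := by
    rw [kraft, Finset.sum_congr rfl fun k hk => by rw [hc k hk],
      Finset.sum_const, Nat.card_Icc, nsmul_eq_mul]
  have h2c : ((2:ℝ) ^ c) ≠ 0 := by positivity
  have h2m : ((2:ℝ) ^ m) ≠ 0 := by positivity
  have hrc : (r : ℝ) * 2 ^ c = ((j + 1 - i : ℕ) : ℝ) * 2 ^ m := by
    rw [hr, hkr]; field_simp
  have hrcn : r * 2 ^ c = (j + 1 - i) * 2 ^ m := by exact_mod_cast hrc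
  have hsplitp : (2:ℕ) ^ c = 2 ^ (c - m) * 2 ^ m := by rw [← pow_add]; congr 1; omega
  rw [hsplitp, ← mul_assoc] at hrcn
  have key2 : r * 2 ^ (c - m) = j + 1 - i :=
    Nat.eq_of_mul_eq_mul_right (by positivity) hrcn
  have h2cm : 2 ≤ 2 ^ (c - m) := by
    have : (2:ℕ) ^ 1 ≤ 2 ^ (c - m) := Nat.pow_le_pow_right (by norm_num) (by omega)
    simpa using this
  have hr1 : 1 ≤ r := by
    rcases Nat.eq_zero_or_pos r with h0 | h
    · rw [h0] at key2; simp at key2; omega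
    · exact h
  have h2r : 2 * r ≤ j + 1 - i := by
    calc 2 * r = r * 2 := by ring
    _ ≤ r * 2 ^ (c - m) := Nat.mul_le_mul_left r h2cm
    _ = j + 1 - i := key2
  set D := j + 1 - i - r with hD
  have C : ClipCtx l l' n n' i j c m r D :=
    { hi1 := hi1, hij := hij, hjn := hjn, hr1 := hr1,
      hd1 := by omega, hrd := by omega, hnd := by omega, hmc := hmc, hcv := hcv,
      hmeq := hm.symm, left := hl'left, mid := hl'mid,
      rig := fun k hk => by
        rw [hl'right k hk, show k + (j - i + 1) - r = k + D by omega] }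
  have hkb : kraft l' i (i + r - 1) = kraft l i j := by
    have hsum : ∑ t ∈ Finset.Icc i (i + r - 1), ((2:ℝ) ^ l' t)⁻¹
        = (Finset.Icc i (i + r - 1)).card • ((2:ℝ) ^ m)⁻¹ :=
      Finset.sum_eq_card_nsmul fun t ht => by
        rw [Finset.mem_Icc] at ht
        rw [hl'mid t ht.1 (by omega)]
    rw [kraft, hsum, Nat.card_Icc, show i + r - 1 + 1 - i = r by omega, nsmul_eq_mul, hkr]
    field_simp
    linear_combination hrc
  have key : ∀ p : ℕ × ℕ, IsFullSeg l n p.1 p.2 → p ≠ (i, j) →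
      IsFullSeg l' n' (clipMap i j r p).1 (clipMap i j r p).2 ∧
      kraft l' (clipMap i j r p).1 (clipMap i j r p).2 = kraft l p.1 p.2 ∧
      nmaxim l' n' (clipMap i j r p).1 (clipMap i j r p).2 = nmaxim l n p.1 p.2 := by
    rintro ⟨h, k⟩ hfp hne
    dsimp only at hfp ⊢
    obtain ⟨g1, g2, g3, g4⟩ := hfp
    rcases C.lam hmin ⟨g1, g2, g3, g4⟩ hne with h3 | h3 | ⟨h3, h4⟩
    · simp only [C.clip1 h3]
      refine ⟨⟨g1, g2, by omega, ?_⟩, C.k1 h3, C.p1 g1 g2 h3⟩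
      rw [C.p1 g1 g2 h3, C.w1 g2 h3]
      exact g4
    · simp only [C.clip2 h3 g2]
      refine ⟨⟨by omega, by omega, by omega, ?_⟩, ?_, ?_⟩
      · rw [show nmaxim l' n' (h - D) (k - D) = nmaxim l n h k from ?_,
            show segMin l' (h - D) (k - D) = segMin l h k from ?_]
        · exact g4
        · rw [C.w2 (by omega) (by omega), show h - D + D = h by omega,
            show k - D + D = k by omega]
        · rw [C.p2 (by omega) (by omega) (by omega), show h - D + D = h by omega,
            show k - D + D = k by omega]
      · rw [C.k2 (by omega), show h - D + D = h by omega, show k - D + D = k by omega]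
      · rw [C.p2 (by omega) (by omega) (by omega), show h - D + D = h by omega,
          show k - D + D = k by omega]
    · simp only [C.clip3 h3 h4]
      have hkD : k - D + D = k := by omega
      have hnej : (h, k - D + D) ≠ (i, j) := by rw [hkD]; exact hne
      refine ⟨⟨g1, by omega, by omega, ?_⟩, ?_, ?_⟩
      · rw [C.p3 g1 h3 (by omega) (by omega) hnej, C.w3 g1 h3 (by omega) (by omega) hnej,
          hkD]
        exact g4
      · exact C.k3 hkb h3 h4
      · rw [C.p3 g1 h3 (by omega) (by omega) hnej, hkD]
  have hginv : ∀ p : ℕ × ℕ, IsFullSeg l n p.1 p.2 → p ≠ (i, j) →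
      clipInv i j r (clipMap i j r p) = p := by
    rintro ⟨h, k⟩ hfp hne
    dsimp only at hfp
    obtain ⟨g1, g2, g3, g4⟩ := hfp
    rcases C.lam hmin ⟨g1, g2, g3, g4⟩ hne with h3 | h3 | ⟨h3, h4⟩
    · rw [C.clip1 h3]
      simp [clipInv, h3]
    · rw [C.clip2 h3 g2]
      simp only [clipInv]
      rw [if_neg (by show ¬(k - D < i); omega), if_pos (by show i + r ≤ h - D; omega)]
      simp only [Prod.mk.injEq]
      constructor <;> omega
    · rw [C.clip3 h3 h4]
      simp only [clipInv]
      rw [if_neg (by show ¬(k - D < i); omega), if_neg (by show ¬(i + r ≤ h); omega)]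
      simp only [Prod.mk.injEq]
      exact ⟨trivial, by omega⟩
  refine ⟨⟨fun p hp => (key p hp.1 hp.2).1, ?_, ?_⟩,
    fun p h1 h2 => ⟨(key p h1 h2).2.1, (key p h1 h2).2.2⟩⟩
  · intro p hp q hq he
    rw [← hginv p hp.1 hp.2, ← hginv q hq.1 hq.2, he]
  · rintro ⟨h', k'⟩ hq
    obtain ⟨hq1, hq2, hq3, hq4⟩ := hq
    rcases lt_or_ge k' i with hc1 | hc1
    · refine ⟨(h', k'), ⟨⟨hq1, hq2, by omega, ?_⟩,
        by intro hcc; rw [Prod.mk.injEq] at hcc; omega⟩, C.clip1 hc1⟩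
      rw [← C.p1 hq1 hq2 hc1, ← C.w1 hq2 hc1]
      exact hq4
    · rcases le_or_gt (i + r) h' with hc2 | hc2
      · refine ⟨(h' + D, k' + D), ⟨⟨by omega, by omega, by omega, ?_⟩,
          by intro hcc; rw [Prod.mk.injEq] at hcc; omega⟩, ?_⟩
        · rw [← C.p2 hc2 hq2 hq3, ← C.w2 hc2 hq2]
          exact hq4
        · rw [C.clip2 (by omega) (by omega)]
          simp only [Prod.mk.injEq]
          constructor <;> omega
      · have hb1 : h' ≤ i := by
          by_contra hcon
          push_neg at hcon
          exact C.noStartInBlock ⟨hq1, hq2, hq3, hq4⟩ hcon hc2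
        have hb2 : i + r ≤ k' + 1 := by
          by_contra hcon
          push_neg at hcon
          exact C.noEndInBlock ⟨hq1, hq2, hq3, hq4⟩ hc1 (by omega)
        have hnb : (h', k') ≠ (i, i + r - 1) := by
          intro hcc
          rw [Prod.mk.injEq] at hcc
          obtain ⟨e1, e2⟩ := hcc
          subst e1; subst e2
          exact C.blockNotFull ⟨hq1, hq2, hq3, hq4⟩
        have hnej : (h', k' + D) ≠ (i, j) := by
          intro hcc
          rw [Prod.mk.injEq] at hcc
          apply hnb
          rw [Prod.mk.injEq]
          omega
        refine ⟨(h', k' + D), ⟨⟨hq1, by omega, by omega, ?_⟩, hnej⟩, ?_⟩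
        · rw [← C.p3 hq1 hb1 hb2 hq3 hnej, ← C.w3 hq1 hb1 (by omega) hq3 hnej]
          exact hq4
        · rw [C.clip3 hb1 (by omega)]
          simp only [Prod.mk.injEq]
          exact ⟨trivial, by omega⟩
end

section
/- Let l be a sequence of positive integers that is the path-length sequence of a topological binary tree, and let [i,j] be a full segment with m = m[i,j]. Then the leaves v_i, ..., v_j are exactly all the leaf-descendants of their depth-m ancestors; i.e., every leaf having a depth-m ancestor in common with some v_k (i ≤ k ≤ j) has index in [i,j]. -/
theorem BTree.depths_eq_map (t : BTree) : t.depths = t.codes.map List.length := by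
  induction t with
  | leaf => simp [BTree.depths, BTree.codes]
  | node L R ihL ihR =>
    simp only [BTree.depths, BTree.codes, List.map_append, List.map_map, ihL, ihR]
    congr 1

theorem BTree.codes_prefixfree (t : BTree) :
    t.codes.Pairwise (fun c d => ¬ c <+: d ∧ ¬ d <+: c) := by
  induction t with
  | leaf => simp [BTree.codes]
  | node L R ihL ihR =>
    rw [BTree.codes, List.pairwise_append]
    refine ⟨?_, ?_, ?_⟩
    · rw [List.pairwise_map]
      exact ihL.imp (fun h => by simpa [List.cons_prefix_cons] using h)
    · rw [List.pairwise_map]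
      exact ihR.imp (fun h => by simpa [List.cons_prefix_cons] using h)
    · intro x hx y hy
      simp only [List.mem_map] at hx hy
      obtain ⟨c, -, rfl⟩ := hx
      obtain ⟨d, -, rfl⟩ := hy
      simp [List.cons_prefix_cons]

theorem BTree.codes_contig (t : BTree) :
    ∀ (p : List Bool) (u w v : ℕ) (hu : u < t.codes.length) (hw : w < t.codes.length)
      (hv : v < t.codes.length), u ≤ w → w ≤ v →
      p <+: t.codes[u] → p <+: t.codes[v] → p <+: t.codes[w] := by
  induction t with
  | leaf =>
    intro p u w v hu hw hv h1 h2 hpu hpv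
    simp [BTree.codes] at hu hw ⊢
    subst hu; subst hw
    simpa [BTree.codes] using hpu
  | node L R ihL ihR =>
    intro p u w v hu hw hv h1 h2 hpu hpv
    simp only [BTree.codes, List.length_append, List.length_map] at hu hw hv
    rcases p with _ | ⟨b, q⟩
    · exact List.nil_prefix
    simp only [BTree.codes] at hpu hpv ⊢
    by_cases hvA : v < L.codes.length
    · have huA : u < L.codes.length := by omega
      have hwA : w < L.codes.length := by omega
      rw [List.getElem_append_left (by simpa using huA), List.getElem_map] at hpu
      rw [List.getElem_append_left (by simpa using hvA), List.getElem_map] at hpv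
      rw [List.getElem_append_left (by simpa using hwA), List.getElem_map]
      rw [List.cons_prefix_cons] at hpu hpv ⊢
      exact ⟨hpu.1, ihL q u w v huA hwA hvA h1 h2 hpu.2 hpv.2⟩
    · by_cases huA : u < L.codes.length
      · rw [List.getElem_append_left (by simpa using huA), List.getElem_map,
          List.cons_prefix_cons] at hpu
        rw [List.getElem_append_right (by simp; omega), List.getElem_map,
          List.cons_prefix_cons] at hpv
        exact absurd (hpu.1.symm.trans hpv.1) (by decide)
      · rw [List.getElem_append_right (by simp; omega), List.getElem_map] at hpu
        rw [List.getElem_append_right (by simp; omega), List.getElem_map] at hpv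
        rw [List.getElem_append_right (by simp; omega), List.getElem_map]
        rw [List.cons_prefix_cons] at hpu hpv ⊢
        refine ⟨hpu.1, ihR q _ _ _ ?_ ?_ ?_ (by simp only [List.length_map]; omega)
          (by simp only [List.length_map]; omega) hpu.2 hpv.2⟩
        all_goals simp only [List.length_map] at *; omega

/-- For a full segment `[i,j]` with maximin `m`, the leaves `v_i, ..., v_j` are exactly
all the leaf-descendants of their depth-`m` ancestors: any leaf sharing a depth-`m`
ancestor (length-`m` codeword prefix) with some `v_k`, `i ≤ k ≤ j`, has index in `[i,j]`. -/
theorem full_segment_closed_under_ancestors (t : BTree) (n : ℕ) (l : ℕ → ℕ)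
    (hn : n = t.depths.length)
    (hl : ∀ k ∈ Finset.Icc 1 n, l k = t.depths.getD (k - 1) 0)
    (i j : ℕ) (h : IsFullSeg l n i j) :
    ∀ a ∈ Finset.Icc 1 n, ∀ k ∈ Finset.Icc i j,
      (t.codes.getD (a - 1) []).take (nmaxim l n i j) =
        (t.codes.getD (k - 1) []).take (nmaxim l n i j) →
      a ∈ Finset.Icc i j := by
  obtain ⟨h1i, hij, hjn, hm⟩ := h
  set m := nmaxim l n i j with hmdef
  intro a ha k hk hpre
  simp only [Finset.mem_Icc] at ha hk ⊢
  have hnc : n = t.codes.length := by rw [hn, t.depths_eq_map, List.length_map]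
  have hlen : ∀ b (hb1 : 1 ≤ b) (hbn : b ≤ n), l b = (t.codes[b-1]'(by omega)).length := by
    intro b hb1 hbn
    rw [hl b (Finset.mem_Icc.mpr ⟨hb1, hbn⟩)]
    simp only [t.depths_eq_map]
    rw [List.getD_eq_getElem _ _ (by simp only [List.length_map]; omega), List.getElem_map]
  have hsegle : ∀ x y b, x ≤ b → b ≤ y → segMin l x y ≤ l b := by
    intro x y b h1 h2
    exact (Finset.fold_min_le _).mpr (Or.inr ⟨b, Finset.mem_Icc.mpr ⟨h1, h2⟩, le_rfl⟩)
  have hsegge : ∀ x y c, x ≤ y → (∀ b, x ≤ b → b ≤ y → c ≤ l b) → c ≤ segMin l x y := by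
    intro x y c hxy hb
    exact (Finset.le_fold_min _).mpr ⟨hb x le_rfl hxy,
      fun b hb' => hb b (Finset.mem_Icc.mp hb').1 (Finset.mem_Icc.mp hb').2⟩
  have hnm : ∀ x y, 1 ≤ x → x ≤ i → j ≤ y → y ≤ n → (x, y) ≠ (i, j) →
      segMin l x y ≤ m := by
    intro x y h1 h2 h3 h4 h5
    exact (Finset.le_fold_max _).mpr (Or.inr ⟨(x, y),
      by simp only [Finset.mem_filter, Finset.mem_product, Finset.mem_Icc]
         exact ⟨⟨⟨h1, h2⟩, h3, h4⟩, h5⟩, le_rfl⟩)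
  have hk1 : 1 ≤ k := le_trans h1i hk.1
  have hkn : k ≤ n := le_trans hk.2 hjn
  have hmk : m < l k := lt_of_lt_of_le hm (hsegle i j k hk.1 hk.2)
  have hka : k - 1 < t.codes.length := by omega
  have haa : a - 1 < t.codes.length := by omega
  set p : List Bool := (t.codes[k-1]'hka).take m with hp
  have hplen : p.length = m := by
    rw [hp, List.length_take]
    have := hlen k hk1 hkn
    omega
  have hpk : p <+: t.codes[k-1]'hka := List.take_prefix _ _
  have hpa : p <+: t.codes[a-1]'haa := by
    rw [List.getD_eq_getElem _ _ haa, List.getD_eq_getElem _ _ hka] at hpre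
    rw [hp, ← hpre]
    exact List.take_prefix _ _
  have key : ∀ b, 1 ≤ b → b ≤ n → (a ≤ b ∧ b ≤ k ∨ k ≤ b ∧ b ≤ a) → b ≠ k →
      m + 1 ≤ l b := by
    intro b hb1 hbn hbr hbk
    have hba : b - 1 < t.codes.length := by omega
    have hw : p <+: t.codes[b-1]'hba := by
      rcases hbr with ⟨h1, h2⟩ | ⟨h1, h2⟩
      · exact t.codes_contig p (a-1) (b-1) (k-1) haa hba hka (by omega) (by omega) hpa hpk
      · exact t.codes_contig p (k-1) (b-1) (a-1) hka hba haa (by omega) (by omega) hpk hpa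
    have hlb := hlen b hb1 hbn
    have hge : m ≤ (t.codes[b-1]'hba).length := hplen ▸ hw.length_le
    rcases eq_or_lt_of_le hge with heq | hlt
    · exfalso
      have hpb : p = t.codes[b-1]'hba := hw.eq_of_length (by omega)
      have hpref : t.codes[b-1]'hba <+: t.codes[k-1]'hka := hpb ▸ hpk
      have hpf := List.pairwise_iff_getElem.mp t.codes_prefixfree
      rcases Nat.lt_or_ge (b-1) (k-1) with hlt' | hge'
      · exact (hpf (b-1) (k-1) hba hka hlt').1 hpref
      · have : k - 1 < b - 1 := by omega
        exact (hpf (k-1) (b-1) hka hba this).2 hpref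
    · omega
  refine ⟨?_, ?_⟩
  · by_contra hai
    push_neg at hai
    have hbig : m + 1 ≤ segMin l a j := by
      refine hsegge a j (m+1) (by omega) (fun b hb1 hb2 => ?_)
      by_cases hbk : b < k
      · exact key b (by omega) (by omega) (Or.inl ⟨hb1, by omega⟩) (by omega)
      · exact le_trans (by omega : m + 1 ≤ segMin l i j) (hsegle i j b (by omega) hb2)
    have hsmall : segMin l a j ≤ m := hnm a j (by omega) (by omega) le_rfl hjn
      (by intro hh; rw [Prod.mk.injEq] at hh; omega)
    omega
  · by_contra haj
    push_neg at haj
    have hbig : m + 1 ≤ segMin l i a := by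
      refine hsegge i a (m+1) (by omega) (fun b hb1 hb2 => ?_)
      by_cases hbk : k < b
      · exact key b (by omega) (by omega) (Or.inr ⟨by omega, hb2⟩) (by omega)
      · exact le_trans (by omega : m + 1 ≤ segMin l i j) (hsegle i j b hb1 (by omega))
    have hsmall : segMin l i a ≤ m := hnm i a h1i le_rfl (by omega) ha.2
      (by intro hh; rw [Prod.mk.injEq] at hh; omega)
    omega
end
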